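/- arXiv:1212.1952 — 2 statements merged into one kernel-verified Lean document; each statement's English description precedes it below -/
import Mathlib

section
/- (Theorem 4, Sylvester's theorem) Let R be a commutative ring, m ≥ 1, A = (a_{ij})_{1≤i,j≤m} an m×m matrix over R, and 1 ≤ r ≤ m−1. Let A_r = (a_{ij})_{1≤i,j≤r}, and for r+1 ≤ i,j ≤ m let b_{ij} be the determinant of the (r+1)×(r+1) matrix whose rows are rows 1,…,r,i of A restricted to columns 1,…,r,j (i.e., the bordered matrix with first r rows/columns those of A_r, last column entries a_{1j},…,a_{rj},a_{ij} and last row entries a_{i1},…,a_{ir},a_{ij}). Then det( (b_{ij})_{r+1≤i,j≤m} ) = (det A_r)^{m−r−1} · det A. -/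
/-!
If the leading block `P` of `A` is invertible, the Schur complement formula expands each bordered
minor as `b i j = det P * (A₂₂ - A₂₁ P⁻¹ A₁₂) i j`, so `det b = (det P) ^ n * det (A₂₂ - A₂₁ P⁻¹ A₁₂)`,
while `det A = det P * det (A₂₂ - A₂₁ P⁻¹ A₁₂)`. Both sides of the identity are integer polynomials
in the entries of `A`, so it suffices to prove it for the generic matrix over `ℤ[X_ij]`, whose leading
minor is nonzero and hence invertible in the fraction field.
-/

namespace Matrix

variable {R S : Type*} [CommRing R] [CommRing S] {m n : Type*}
  [Fintype m] [DecidableEq m] [Fintype n] [DecidableEq n]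

def borderedMinor (A : Matrix (m ⊕ n) (m ⊕ n) R) (i j : n) : R :=
  (A.submatrix (Sum.map id fun _ : Unit => i) (Sum.map id fun _ : Unit => j)).det

theorem map_det_of_borderedMinor (f : R →+* S) (A : Matrix (m ⊕ n) (m ⊕ n) R) :
    f (of (borderedMinor A)).det = (of (borderedMinor (A.map f))).det := by
  rw [RingHom.map_det]
  congr 1
  ext i j
  simp [borderedMinor, RingHom.map_det, submatrix_map]

theorem map_det_toBlocks₁₁_pow_mul_det (f : R →+* S) (A : Matrix (m ⊕ n) (m ⊕ n) R) (k : ℕ) :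
    f (A.toBlocks₁₁.det ^ k * A.det) = (A.map f).toBlocks₁₁.det ^ k * (A.map f).det := by
  rw [map_mul, map_pow, RingHom.map_det, RingHom.map_det]
  rfl

omit [Fintype n] [DecidableEq n] in
theorem borderedMinor_eq_det_mul_schur (A : Matrix (m ⊕ n) (m ⊕ n) R)
    [Invertible A.toBlocks₁₁] (i j : n) :
    borderedMinor A i j =
      A.toBlocks₁₁.det * (A.toBlocks₂₂ - A.toBlocks₂₁ * ⅟A.toBlocks₁₁ * A.toBlocks₁₂) i j := by
  have hblocks : A.submatrix (Sum.map id fun _ : Unit => i) (Sum.map id fun _ : Unit => j) =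
      fromBlocks A.toBlocks₁₁ (A.toBlocks₁₂.submatrix id fun _ => j)
        (A.toBlocks₂₁.submatrix (fun _ => i) id) (of fun _ _ => A.toBlocks₂₂ i j) := by
    ext (s | s) (t | t) <;> rfl
  rw [borderedMinor, hblocks, det_fromBlocks₁₁, det_unique (n := Unit)]
  simp [mul_apply]

theorem det_borderedMinor_of_isUnit [Nonempty n] (A : Matrix (m ⊕ n) (m ⊕ n) R)
    (hA : IsUnit A.toBlocks₁₁.det) :
    (of (borderedMinor A)).det = A.toBlocks₁₁.det ^ (Fintype.card n - 1) * A.det := by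
  let := A.toBlocks₁₁.invertibleOfIsUnitDet hA
  have hschur : of (borderedMinor A) =
      A.toBlocks₁₁.det • (A.toBlocks₂₂ - A.toBlocks₂₁ * ⅟A.toBlocks₁₁ * A.toBlocks₁₂) := by
    ext i j
    exact borderedMinor_eq_det_mul_schur A i j
  have hdet := det_fromBlocks₁₁ A.toBlocks₁₁ A.toBlocks₁₂ A.toBlocks₂₁ A.toBlocks₂₂
  rw [fromBlocks_toBlocks] at hdet
  rw [hschur, det_smul, hdet, ← mul_assoc, ← pow_succ, Nat.sub_add_cancel Fintype.card_pos]

omit [Fintype n] [DecidableEq n] in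
theorem det_toBlocks₁₁_mvPolynomialX_ne_zero :
    (mvPolynomialX (m ⊕ n) (m ⊕ n) ℤ).toBlocks₁₁.det ≠ 0 := by
  have hrename : (mvPolynomialX (m ⊕ n) (m ⊕ n) ℤ).toBlocks₁₁ =
      (mvPolynomialX m m ℤ).map (MvPolynomial.rename (Prod.map Sum.inl Sum.inl)) := by
    ext s t
    simp [toBlocks₁₁]
  rw [hrename, ← AlgHom.coe_toRingHom, ← RingHom.mapMatrix_apply, ← RingHom.map_det]
  refine (map_ne_zero_iff _ ?_).2 (det_mvPolynomialX_ne_zero m ℤ)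
  exact MvPolynomial.rename_injective _ (Sum.inl_injective.prodMap Sum.inl_injective)

theorem det_borderedMinor_mvPolynomialX [Nonempty n] :
    (of (borderedMinor (mvPolynomialX (m ⊕ n) (m ⊕ n) ℤ))).det =
      (mvPolynomialX (m ⊕ n) (m ⊕ n) ℤ).toBlocks₁₁.det ^ (Fintype.card n - 1) *
        (mvPolynomialX (m ⊕ n) (m ⊕ n) ℤ).det := by
  set X := mvPolynomialX (m ⊕ n) (m ⊕ n) ℤ
  set K := FractionRing (MvPolynomial ((m ⊕ n) × (m ⊕ n)) ℤ)
  set ι := algebraMap (MvPolynomial ((m ⊕ n) × (m ⊕ n)) ℤ) K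
  have hι : Function.Injective ι := IsFractionRing.injective _ K
  have hunit : IsUnit (X.map ι).toBlocks₁₁.det := by
    refine isUnit_iff_ne_zero.2 ?_
    rw [show (X.map ι).toBlocks₁₁ = ι.mapMatrix X.toBlocks₁₁ from rfl, ← RingHom.map_det]
    exact (map_ne_zero_iff ι hι).2 det_toBlocks₁₁_mvPolynomialX_ne_zero
  apply hι
  rw [map_det_of_borderedMinor, map_det_toBlocks₁₁_pow_mul_det]
  exact det_borderedMinor_of_isUnit _ hunit

theorem det_borderedMinor [Nonempty n] (A : Matrix (m ⊕ n) (m ⊕ n) R) :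
    (of (borderedMinor A)).det = A.toBlocks₁₁.det ^ (Fintype.card n - 1) * A.det := by
  let φ := MvPolynomial.eval₂Hom (Int.castRingHom R) fun p : (m ⊕ n) × (m ⊕ n) => A p.1 p.2
  have hX : (mvPolynomialX (m ⊕ n) (m ⊕ n) ℤ).map φ = A := mvPolynomialX_map_eval₂ _ A
  have hgeneric := congrArg φ det_borderedMinor_mvPolynomialX
  rwa [map_det_of_borderedMinor, map_det_toBlocks₁₁_pow_mul_det, hX] at hgeneric

end Matrix

open Matrix

/-- Theorem 4 (Sylvester's theorem): for an `m × m` matrix `A` over a commutative ring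
and `1 ≤ r ≤ m − 1`, let `b i j` (for `r+1 ≤ i, j ≤ m`, here indexed by `Fin (m-r)`)
be the determinant of the `(r+1) × (r+1)` matrix obtained from the leading `r × r`
submatrix `A_r` of `A` bordered by row `i` and column `j`.  Then
`det (b i j) = (det A_r)^(m−r−1) · det A`. -/
theorem sylvester_det {R : Type*} [CommRing R] (m r : ℕ) (hrm : r + 1 ≤ m)
    (A : Matrix (Fin m) (Fin m) R) :
    Matrix.det (Matrix.of fun i j : Fin (m-r) =>
      Matrix.det (Matrix.of fun s t : Fin (r+1) =>
        A (if hs : (s : ℕ) < r then ⟨s, by omega⟩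
            else ⟨r + (i : ℕ), by have := i.isLt; omega⟩)
          (if ht : (t : ℕ) < r then ⟨t, by omega⟩
            else ⟨r + (j : ℕ), by have := j.isLt; omega⟩)))
    = (Matrix.det (Matrix.of fun s t : Fin r =>
        A (Fin.castLE (by omega) s) (Fin.castLE (by omega) t))) ^ (m - r - 1)
      * Matrix.det A := by
  have : Nonempty (Fin (m - r)) := ⟨⟨0, by omega⟩⟩
  let e : Fin r ⊕ Fin (m - r) ≃ Fin m := finSumFinEquiv.trans (finCongr (by omega))
  let eBorder : Fin r ⊕ Unit ≃ Fin (r + 1) :=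
    (Equiv.sumCongr (Equiv.refl _) finOneEquiv.symm).trans finSumFinEquiv
  have hblock := det_borderedMinor (A.submatrix e e)
  rw [det_submatrix_equiv_self, Fintype.card_fin] at hblock
  convert hblock using 2
  · ext i j
    rw [of_apply, of_apply, borderedMinor, ← det_submatrix_equiv_self eBorder]
    congr 1
    ext (s | _) (t | _) <;> simp [eBorder, e] <;> rfl
  · rfl
end

section
/- (Plücker relations for Pfaffians, equation (75)) Let R be a commutative ring, I a type, and a : I → I → R with a i j = −a j i and a i i = 0 for all i, j. For a finite sequence of indices i₁,…,i_{2s} ∈ I write (i₁,…,i_{2s}) for the Pfaffian of the 2s×2s skew-symmetric matrix (a_{i_k i_l})_{1≤k,l≤2s}, with the convention that the empty Pfaffian equals 1. Then for all odd positive integers K and L and all indices i₁,…,i_K, j₁,…,j_L ∈ I: Σ_{l=1}^L (−1)^l·(i₁,…,i_K,j_l)·(j₁,…,ĵ_l,…,j_L) + Σ_{k=1}^K (−1)^k·(i₁,…,î_k,…,i_K)·(j₁,…,j_L,i_k) = 0, where a hat means the corresponding index is omitted. -/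
/-!
Expanding `(i₁,…,i_K,j_l)` and `(j₁,…,j_L,i_k)` along their last index turns both sums into
`∑_{k,l} ± a(i_k, j_l) · (i₁,…,î_k,…,i_K) · (j₁,…,ĵ_l,…,j_L)`, with opposite signs since `a` is
skew-symmetric.

The expansion along the first index comes from the definition: every permutation in the sum fixes
`0`, and recording the partner of `0` together with the pairing of the remaining indices is a
sign-compatible bijection. For the expansion along the last index we pass to Pfaffians
`pfaffianOn a S` of principal submatrices indexed by finite ordered sets, defined by expansion
along the least element: by induction, expanding along the least and then the greatest element, or
the other way round, yields the same terms.
-/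

open scoped BigOperators

noncomputable section

/-- The index `2k` in `Fin (2m)`, for `k : Fin m`. -/
def fin2 {m : ℕ} (k : Fin m) : Fin (2*m) := ⟨2 * (k : ℕ), by have := k.isLt; omega⟩

/-- The index `2k+1` in `Fin (2m)`, for `k : Fin m`. -/
def fin2' {m : ℕ} (k : Fin m) : Fin (2*m) := ⟨2 * (k : ℕ) + 1, by have := k.isLt; omega⟩

/-- The Pfaffian of a `2m × 2m` (skew-symmetric) matrix:
`Pf a = ∑ sgn(σ) ∏_{k=1}^m a_{σ(2k−1) σ(2k)}`, summed over permutations `σ` with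
`σ(1) < σ(3) < ⋯ < σ(2m−1)` and `σ(2k−1) < σ(2k)` for all `k`.  For `m = 0` this is
the empty Pfaffian, equal to `1`. -/
noncomputable def Pf {R : Type*} [CommRing R] (m : ℕ) (a : Fin (2*m) → Fin (2*m) → R) : R :=
  ∑ σ ∈ Finset.univ.filter (fun σ : Equiv.Perm (Fin (2*m)) =>
      (∀ k : Fin m, σ (fin2 k) < σ (fin2' k)) ∧
      ∀ k l : Fin m, k < l → σ (fin2 k) < σ (fin2 l)),
    (Equiv.Perm.sign σ : ℤ) • ∏ k : Fin m, a (σ (fin2 k)) (σ (fin2' k))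

open Finset Equiv Equiv.Perm

theorem erase_erase_ssubset {α : Type*} [DecidableEq α] {S : Finset α} {x : α} (hx : x ∈ S)
    (y : α) :
    (S.erase x).erase y ⊂ S :=
  (erase_subset y _).trans_ssubset (erase_ssubset hx)

theorem card_filter_erase_add {α : Type*} [DecidableEq α] (p : α → Prop) [DecidablePred p]
    (S : Finset α) (y : α) :
    #{t ∈ S.erase y | p t} + (if y ∈ S ∧ p y then 1 else 0) = #{t ∈ S | p t} := by
  rw [filter_erase]
  split_ifs with h
  · exact card_erase_add_one (mem_filter.2 h)
  · rw [erase_eq_of_notMem (by rwa [mem_filter]), add_zero]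

theorem Fin.sum_univ_erase_zero {M : Type*} [AddCommMonoid M] {n : ℕ} (f : Fin (n + 1) → M) :
    ∑ i ∈ univ.erase 0, f i = ∑ i : Fin n, f i.succ := by
  rw [show univ.erase 0 = univ.map (Fin.succEmb n) by ext t; cases t using Fin.cases <;> simp,
    sum_map]
  rfl

theorem Fin.sum_univ_erase_last {M : Type*} [AddCommMonoid M] {n : ℕ} (f : Fin (n + 1) → M) :
    ∑ i ∈ univ.erase (Fin.last n), f i = ∑ i : Fin n, f i.castSucc := by
  rw [show univ.erase (Fin.last n) = univ.map Fin.castSuccEmb by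
      ext t; cases t using Fin.lastCases <;> simp,
    sum_map]
  rfl

section PfaffianOn

variable {R α : Type*} [CommRing R] [LinearOrder α]

/-- The Pfaffian of the principal submatrix of `a` on `S`, expanded along the least element of `S`;
only the entries `a x y` with `x < y` enter. -/
def pfaffianOn (a : α → α → R) (S : Finset α) : R :=
  if h : S.Nonempty then
    ∑ y ∈ S.erase (S.min' h), (-1) ^ #{t ∈ S | S.min' h < t ∧ t < y} * a (S.min' h) y *
      pfaffianOn a ((S.erase (S.min' h)).erase y)
  else 1
termination_by S.card
decreasing_by exact card_erase_le.trans_lt (card_erase_lt_of_mem (min'_mem S h))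

theorem pfaffianOn_empty (a : α → α → R) : pfaffianOn a ∅ = 1 := by
  rw [pfaffianOn, dif_neg Finset.not_nonempty_empty]

theorem pfaffianOn_eq_sum_of_isLeast (a : α → α → R) {S : Finset α} {x : α}
    (hx : IsLeast (S : Set α) x) :
    pfaffianOn a S = ∑ y ∈ S.erase x, (-1) ^ #{t ∈ S | x < t ∧ t < y} * a x y *
      pfaffianOn a ((S.erase x).erase y) := by
  have hS : S.Nonempty := ⟨x, hx.1⟩
  obtain rfl : S.min' hS = x := (isLeast_min' S hS).unique hx
  rw [pfaffianOn, dif_pos hS]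

theorem pfaffianOn_map {β : Type*} [LinearOrder β] (f : α ↪o β) (a : β → β → R)
    (S : Finset α) :
    pfaffianOn a (S.map f.toEmbedding) = pfaffianOn (fun i j => a (f i) (f j)) S := by
  induction S using Finset.strongInduction with
  | H S ih =>
  rcases S.eq_empty_or_nonempty with rfl | hS
  · simp only [map_empty, pfaffianOn_empty]
  obtain ⟨x, hx⟩ : ∃ x, IsLeast (S : Set α) x := ⟨_, isLeast_min' S hS⟩
  have hfx : IsLeast (S.map f.toEmbedding : Set β) (f.toEmbedding x) := by
    rw [coe_map]; exact f.monotone.map_isLeast hx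
  rw [pfaffianOn_eq_sum_of_isLeast _ hfx, pfaffianOn_eq_sum_of_isLeast _ hx,
    ← map_erase, sum_map]
  refine sum_congr rfl fun y _ => ?_
  rw [← map_erase, ih _ (erase_erase_ssubset hx.1 y), filter_map, card_map]
  simp

-- Both counts drop by one exactly when the pairs `{x, y}` and `{w, z}` cross, i.e. when `w < y`.
theorem card_between_add_card_between_erase_comm {S : Finset α} {x y w z : α} (hy : y ∈ S)
    (hw : w ∈ S) (hxy : x ≠ y) (hxw : x < w) (hyz : y < z) :
    #{t ∈ S | x < t ∧ t < y} + #{t ∈ (S.erase x).erase y | w < t ∧ t < z} =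
      #{t ∈ S | w < t ∧ t < z} + #{t ∈ (S.erase w).erase z | x < t ∧ t < y} := by
  have h1 := card_filter_erase_add (fun t => w < t ∧ t < z) (S.erase x) y
  have h2 := card_filter_erase_add (fun t => w < t ∧ t < z) S x
  have h3 := card_filter_erase_add (fun t => x < t ∧ t < y) (S.erase w) z
  have h4 := card_filter_erase_add (fun t => x < t ∧ t < y) S w
  by_cases hwy : w < y <;>
    simp [hwy, hxw, hyz, hxw.not_gt, hyz.not_gt, hxy.symm, hy, hw] at h1 h2 h3 h4 <;> omega

theorem pfaffianOn_eq_sum_of_isGreatest (a : α → α → R) {S : Finset α} {z : α}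
    (hz : IsGreatest (S : Set α) z) :
    pfaffianOn a S = ∑ w ∈ S.erase z, (-1) ^ #{t ∈ S | w < t ∧ t < z} * a w z *
      pfaffianOn a ((S.erase w).erase z) := by
  induction S using Finset.strongInduction generalizing z with
  | H S ih =>
  obtain ⟨x, hx⟩ : ∃ x, IsLeast (S : Set α) x := ⟨_, isLeast_min' S ⟨z, hz.1⟩⟩
  rw [pfaffianOn_eq_sum_of_isLeast a hx]
  rcases (hx.2 hz.1).eq_or_lt with rfl | hxz
  · have : S.erase x = ∅ := by
      ext t
      simp only [mem_erase, notMem_empty, iff_false, not_and]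
      exact fun ht htS => ht (le_antisymm (hz.2 htS) (hx.2 htS))
    simp only [this, sum_empty]
  rw [← add_sum_erase _ _ (mem_erase.2 ⟨hxz.ne', hz.1⟩),
    ← add_sum_erase _ _ (mem_erase.2 ⟨hxz.ne, hx.1⟩)]
  -- The terms pairing `x` with `z` agree; the others are double sums over pairs `{x, y}`, `{w, z}`.
  congr 1
  have expand_z : ∀ y ∈ (S.erase x).erase z, pfaffianOn a ((S.erase x).erase y) =
      ∑ w ∈ ((S.erase x).erase y).erase z, (-1) ^ #{t ∈ (S.erase x).erase y | w < t ∧ t < z} *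
        a w z * pfaffianOn a ((((S.erase x).erase y).erase w).erase z) := by
    intro y hy
    refine ih _ (erase_erase_ssubset hx.1 y)
      ⟨?_, fun t ht => hz.2 (mem_of_mem_erase (mem_of_mem_erase ht))⟩
    exact mem_erase.2 ⟨(ne_of_mem_erase hy).symm, mem_erase.2 ⟨hxz.ne', hz.1⟩⟩
  have expand_x : ∀ w ∈ (S.erase z).erase x, pfaffianOn a ((S.erase w).erase z) =
      ∑ y ∈ ((S.erase w).erase z).erase x, (-1) ^ #{t ∈ (S.erase w).erase z | x < t ∧ t < y} *
        a x y * pfaffianOn a ((((S.erase w).erase z).erase x).erase y) := by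
    intro w hw
    refine pfaffianOn_eq_sum_of_isLeast a
      ⟨?_, fun t ht => hx.2 (mem_of_mem_erase (mem_of_mem_erase ht))⟩
    exact mem_erase.2 ⟨hxz.ne, mem_erase.2 ⟨(ne_of_mem_erase hw).symm, hx.1⟩⟩
  rw [sum_congr rfl fun y hy => by rw [expand_z y hy, mul_sum],
    sum_comm' (t' := (S.erase z).erase x) (s' := fun w => ((S.erase w).erase z).erase x)
      (fun y w => by simp only [mem_erase]; grind)]
  refine sum_congr rfl fun w hw => ?_
  rw [expand_x w hw, mul_sum]
  refine sum_congr rfl fun y hy => ?_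
  simp only [mem_erase] at hw hy
  have hxw : x < w := lt_of_le_of_ne (hx.2 hw.2.2) (Ne.symm hw.1)
  have hyz : y < z := lt_of_le_of_ne (hz.2 hy.2.2.2) hy.2.1
  have hsign : (-1 : R) ^ #{t ∈ S | x < t ∧ t < y} *
        (-1) ^ #{t ∈ (S.erase x).erase y | w < t ∧ t < z} =
      (-1) ^ #{t ∈ S | w < t ∧ t < z} * (-1) ^ #{t ∈ (S.erase w).erase z | x < t ∧ t < y} := by
    rw [← pow_add, ← pow_add,
      card_between_add_card_between_erase_comm hy.2.2.2 hw.2.2 (Ne.symm hy.1) hxw hyz]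
  have hset :
      (((S.erase x).erase y).erase w).erase z = (((S.erase w).erase z).erase x).erase y := by
    ext t; simp only [mem_erase]; tauto
  rw [hset]
  linear_combination
    (a x y * a w z * pfaffianOn a ((((S.erase w).erase z).erase x).erase y)) * hsign

end PfaffianOn

namespace Equiv.Perm

def fixZero {n : ℕ} (e : Perm (Fin n)) : Perm (Fin (n + 1)) :=
  decomposeFin.symm (0, e)

@[simp] theorem fixZero_zero {n : ℕ} (e : Perm (Fin n)) : fixZero e 0 = 0 := by
  simp [fixZero]

@[simp] theorem fixZero_succ {n : ℕ} (e : Perm (Fin n)) (i : Fin n) :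
    fixZero e i.succ = (e i).succ := by
  simp [fixZero, decomposeFin_symm_apply_succ]

@[simp] theorem sign_fixZero {n : ℕ} (e : Perm (Fin n)) : sign (fixZero e) = sign e := by
  simp [fixZero, decomposeFin.symm_sign]

theorem exists_fixZero_eq {n : ℕ} {σ : Perm (Fin (n + 1))} (h : σ 0 = 0) :
    ∃ e, fixZero e = σ := by
  obtain ⟨⟨p, e⟩, rfl⟩ := decomposeFin.symm.surjective σ
  rw [decomposeFin_symm_apply_zero] at h
  exact ⟨e, by rw [fixZero, h]⟩

/-- Prepends the pair `(0, k + 1)` to the pairing encoded by `τ`. -/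
def insertPair {n : ℕ} (k : Fin (n + 1)) (τ : Perm (Fin n)) : Perm (Fin (n + 2)) :=
  fixZero (Fin.cycleRange k).symm * fixZero (fixZero τ)

@[simp] theorem insertPair_zero {n : ℕ} (k : Fin (n + 1)) (τ : Perm (Fin n)) :
    insertPair k τ 0 = 0 := by
  simp [insertPair]

@[simp] theorem insertPair_one {n : ℕ} (k : Fin (n + 1)) (τ : Perm (Fin n)) :
    insertPair k τ 1 = k.succ := by
  rw [insertPair, mul_apply, ← Fin.succ_zero_eq_one, fixZero_succ, fixZero_zero, fixZero_succ,
    Fin.cycleRange_symm_zero]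

@[simp] theorem insertPair_succ_succ {n : ℕ} (k : Fin (n + 1)) (τ : Perm (Fin n)) (i : Fin n) :
    insertPair k τ i.succ.succ = (k.succAbove (τ i)).succ := by
  rw [insertPair, mul_apply, fixZero_succ, fixZero_succ, fixZero_succ,
    Fin.cycleRange_symm_succ]

@[simp] theorem sign_insertPair {n : ℕ} (k : Fin (n + 1)) (τ : Perm (Fin n)) :
    sign (insertPair k τ) = (-1) ^ (k : ℕ) * sign τ := by
  simp [insertPair, Fin.sign_cycleRange]

theorem insertPair_injective2 {n : ℕ} : Function.Injective2 (@insertPair n) := by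
  intro k k' τ τ' h
  obtain rfl : k = k' := Fin.succ_injective _ (by rw [← insertPair_one k τ, h, insertPair_one])
  refine ⟨rfl, ext fun i => (k.succAbove_right_injective (Fin.succ_injective _ ?_))⟩
  rw [← insertPair_succ_succ, h, insertPair_succ_succ]

theorem exists_insertPair_eq {n : ℕ} {σ : Perm (Fin (n + 2))} (h : σ 0 = 0) :
    ∃ k τ, insertPair k τ = σ := by
  obtain ⟨k, hk⟩ := Fin.exists_succ_eq.2 (show σ 1 ≠ 0 by rw [← h]; simp)
  set c := fixZero (Fin.cycleRange k).symm
  have hc1 : c 1 = σ 1 := by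
    rw [← Fin.succ_zero_eq_one, fixZero_succ, Fin.cycleRange_symm_zero, hk, Fin.succ_zero_eq_one]
  obtain ⟨e, he⟩ :=
    exists_fixZero_eq (σ := c⁻¹ * σ) (by rw [mul_apply, h, inv_eq_iff_eq, fixZero_zero])
  have he0 : e 0 = 0 := by
    apply Fin.succ_injective
    rw [← fixZero_succ, he, Fin.succ_zero_eq_one, mul_apply, ← hc1, inv_eq_iff_eq]
  obtain ⟨τ, hτ⟩ := exists_fixZero_eq he0
  exact ⟨k, τ, by rw [insertPair, hτ, he, mul_inv_cancel_left]⟩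

end Equiv.Perm

@[simp] theorem fin2_zero {m : ℕ} : fin2 (0 : Fin (m + 1)) = 0 := rfl

@[simp] theorem fin2'_zero {m : ℕ} : fin2' (0 : Fin (m + 1)) = 1 := by
  ext; simp [fin2']

@[simp] theorem fin2_succ {m : ℕ} (j : Fin m) : fin2 j.succ = (fin2 j).succ.succ := by
  ext; simp only [fin2, Fin.val_succ, Fin.succ_mk]; omega

@[simp] theorem fin2'_succ {m : ℕ} (j : Fin m) : fin2' j.succ = (fin2' j).succ.succ := by
  ext; simp only [fin2', Fin.val_succ, Fin.succ_mk, Nat.add_right_cancel_iff]; omega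

theorem exists_eq_fin2_or_eq_fin2' {m : ℕ} (y : Fin (2 * m)) : ∃ j, y = fin2 j ∨ y = fin2' j := by
  refine ⟨⟨y / 2, by omega⟩, ?_⟩
  simp only [fin2, fin2', Fin.ext_iff]
  omega

def pfaffianPerms (m : ℕ) : Finset (Perm (Fin (2 * m))) :=
  {σ | (∀ k : Fin m, σ (fin2 k) < σ (fin2' k)) ∧ ∀ k l : Fin m, k < l → σ (fin2 k) < σ (fin2 l)}

theorem Pf_eq_sum_pfaffianPerms {R : Type*} [CommRing R] (m : ℕ)
    (a : Fin (2 * m) → Fin (2 * m) → R) :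
    Pf m a = ∑ σ ∈ pfaffianPerms m, (sign σ : ℤ) • ∏ k : Fin m, a (σ (fin2 k)) (σ (fin2' k)) :=
  rfl

theorem Pf_zero {R : Type*} [CommRing R] (a : Fin (2 * 0) → Fin (2 * 0) → R) : Pf 0 a = 1 := by
  have : pfaffianPerms 0 = {1} := by
    ext σ
    simp only [pfaffianPerms, IsEmpty.forall_iff, and_self, mem_filter_univ, mem_singleton,
      true_iff]
    ext x
    exact absurd x.isLt (by omega)
  simp [Pf_eq_sum_pfaffianPerms, this]

theorem mem_pfaffianPerms {m : ℕ} {σ : Perm (Fin (2 * m))} :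
    σ ∈ pfaffianPerms m ↔
      (∀ k : Fin m, σ (fin2 k) < σ (fin2' k)) ∧ ∀ k l : Fin m, k < l → σ (fin2 k) < σ (fin2 l) :=
  mem_filter_univ _

theorem insertPair_mem_pfaffianPerms_iff {m : ℕ} (k : Fin (2 * m + 1)) (τ : Perm (Fin (2 * m))) :
    insertPair k τ ∈ pfaffianPerms (m + 1) ↔ τ ∈ pfaffianPerms m := by
  rw [mem_pfaffianPerms, mem_pfaffianPerms]
  simp [Fin.forall_fin_succ, Fin.succAbove_lt_succAbove_iff]

theorem apply_zero_of_mem_pfaffianPerms {m : ℕ} {σ : Perm (Fin (2 * (m + 1)))}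
    (hσ : σ ∈ pfaffianPerms (m + 1)) : σ 0 = 0 := by
  rw [mem_pfaffianPerms] at hσ
  obtain ⟨y, hy⟩ := σ.surjective 0
  obtain ⟨j, rfl | rfl⟩ := exists_eq_fin2_or_eq_fin2' y
  · rcases (Fin.zero_le j).eq_or_lt with rfl | hj
    · exact hy
    · exact absurd (hy ▸ hσ.2 0 j hj) (Fin.not_lt_zero _)
  · exact absurd (hy ▸ hσ.1 j) (Fin.not_lt_zero _)

theorem Pf_succ_row_zero {R : Type*} [CommRing R] (m : ℕ)
    (a : Fin (2 * (m + 1)) → Fin (2 * (m + 1)) → R) :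
    Pf (m + 1) a = ∑ k : Fin (2 * m + 1), (-1) ^ (k : ℕ) * a 0 k.succ *
      Pf m (fun p q => a (k.succAbove p).succ (k.succAbove q).succ) := by
  simp_rw [Pf_eq_sum_pfaffianPerms, mul_sum, ← sum_product']
  refine (sum_bij (fun p _ => insertPair p.1 p.2) ?_ ?_ ?_ ?_).symm
  · rintro ⟨k, τ⟩ h
    exact (insertPair_mem_pfaffianPerms_iff k τ).2 (mem_product.1 h).2
  · rintro ⟨k, τ⟩ - ⟨k', τ'⟩ - h
    exact Prod.ext_iff.2 (insertPair_injective2 h)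
  · intro σ hσ
    obtain ⟨k, τ, rfl⟩ := exists_insertPair_eq (apply_zero_of_mem_pfaffianPerms hσ)
    exact ⟨(k, τ), mem_product.2 ⟨mem_univ _, (insertPair_mem_pfaffianPerms_iff k τ).1 hσ⟩, rfl⟩
  · rintro ⟨k, τ⟩ -
    simp only [sign_insertPair, zsmul_eq_mul, Units.val_mul, Units.val_pow_eq_pow_val,
      Units.val_neg, Units.val_one, Int.cast_mul, Int.cast_pow, Int.cast_neg, Int.cast_one,
      Fin.prod_univ_succ, fin2_zero, fin2'_zero, fin2_succ, fin2'_succ, insertPair_zero,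
      insertPair_one, insertPair_succ_succ]
    ring

theorem Pf_eq_pfaffianOn {R : Type*} [CommRing R] (m : ℕ) (a : Fin (2 * m) → Fin (2 * m) → R) :
    Pf m a = pfaffianOn a univ := by
  induction m with
  | zero => rw [Pf_zero, show (univ : Finset (Fin (2 * 0))) = ∅ from rfl, pfaffianOn_empty]
  | succ m ih =>
    have h0 : IsLeast ((univ : Finset (Fin (2 * (m + 1)))) : Set (Fin (2 * (m + 1)))) 0 :=
      ⟨mem_coe.2 (mem_univ _), fun t _ => Fin.zero_le t⟩
    rw [Pf_succ_row_zero, pfaffianOn_eq_sum_of_isLeast a h0]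
    refine Eq.trans (sum_congr rfl fun k _ => ?_) (Fin.sum_univ_erase_zero (n := 2 * m + 1) _).symm
    have hminor : (univ.erase 0).erase k.succ =
        univ.map (k.succAboveOrderEmb.trans (Fin.succOrderEmb _)).toEmbedding := by
      ext t; cases t using Fin.cases <;> simp [Fin.exists_succAbove_eq_iff]
    rw [ih, hminor, pfaffianOn_map, filter_lt_lt_eq_Ioo, Fin.card_Ioo]
    simp

theorem Pf_succ_column_last {R : Type*} [CommRing R] (m : ℕ)
    (a : Fin (2 * (m + 1)) → Fin (2 * (m + 1)) → R) :
    Pf (m + 1) a = ∑ k : Fin (2 * m + 1), (-1) ^ (k : ℕ) * a k.castSucc (Fin.last (2 * m + 1)) *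
      Pf m (fun p q => a (k.succAbove p).castSucc (k.succAbove q).castSucc) := by
  have hlast : IsGreatest ((univ : Finset (Fin (2 * (m + 1)))) : Set (Fin (2 * (m + 1))))
      (Fin.last (2 * m + 1)) :=
    ⟨mem_coe.2 (mem_univ _), fun t _ => Fin.le_last t⟩
  rw [Pf_eq_pfaffianOn, pfaffianOn_eq_sum_of_isGreatest a hlast]
  refine Eq.trans (Fin.sum_univ_erase_last (n := 2 * m + 1) _) (sum_congr rfl fun k _ => ?_)
  have hminor : (univ.erase k.castSucc).erase (Fin.last _) =
      univ.map (k.succAboveOrderEmb.trans Fin.castSuccOrderEmb).toEmbedding := by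
    ext t; cases t using Fin.lastCases <;> simp [Fin.exists_succAbove_eq_iff]
  have hsign : (-1 : R) ^ (2 * m + 1 - k - 1) = (-1) ^ (k : ℕ) := by
    rw [neg_one_pow_eq_pow_mod_two, show (2 * m + 1 - k - 1) % 2 = k % 2 by omega,
      ← neg_one_pow_eq_pow_mod_two]
  rw [hminor, pfaffianOn_map, ← Pf_eq_pfaffianOn, filter_lt_lt_eq_Ioo, Fin.card_Ioo, Fin.val_last,
    Fin.val_castSucc, hsign]
  rfl

theorem Pf_snoc {R I : Type*} [CommRing R] (a : I → I → R) (m : ℕ) (b : Fin (2 * m + 1) → I)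
    (c : I) :
    Pf (m + 1) (fun p q =>
        a ((Fin.snoc b c : Fin (2 * m + 1 + 1) → I) p)
          ((Fin.snoc b c : Fin (2 * m + 1 + 1) → I) q)) =
      ∑ k : Fin (2 * m + 1), (-1) ^ (k : ℕ) * a (b k) c *
        Pf m (fun p q => a (b (k.succAbove p)) (b (k.succAbove q))) := by
  rw [Pf_succ_column_last]
  refine sum_congr rfl fun k _ => ?_
  simp only [Fin.snoc_castSucc, Fin.snoc_last]

/-- The Plücker relations (75) for Pfaffians: for a skew-symmetric array
`a : I → I → R`, odd `K = 2s+1`, `L = 2t+1`, and indices `i₁, …, i_K`, `j₁, …, j_L`,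
`∑_{l=1}^{L} (−1)^l (i₁,…,i_K,j_l)(j₁,…,ĵ_l,…,j_L)
 + ∑_{k=1}^{K} (−1)^k (i₁,…,î_k,…,i_K)(j₁,…,j_L,i_k) = 0`,
where `(i₁,…,i_{2s})` denotes the Pfaffian of the matrix `(a (i_k) (i_l))`. -/
theorem pluecker_relations_pfaffian {R : Type*} [CommRing R] {I : Type*}
    (a : I → I → R) (hskew : ∀ i j, a j i = - a i j)
    (s t : ℕ) (iv : Fin (2*s+1) → I) (jv : Fin (2*t+1) → I) :
    ∑ l : Fin (2*t+1), (-1 : R) ^ ((l : ℕ) + 1) *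
        Pf (s+1) (fun p q =>
          a ((Fin.snoc iv (jv l) : Fin (2*s+1+1) → I) (Fin.cast (by omega) p))
            ((Fin.snoc iv (jv l) : Fin (2*s+1+1) → I) (Fin.cast (by omega) q))) *
        Pf t (fun p q => a (jv (l.succAbove p)) (jv (l.succAbove q)))
    + ∑ k : Fin (2*s+1), (-1 : R) ^ ((k : ℕ) + 1) *
        Pf s (fun p q => a (iv (k.succAbove p)) (iv (k.succAbove q))) *
        Pf (t+1) (fun p q =>
          a ((Fin.snoc jv (iv k) : Fin (2*t+1+1) → I) (Fin.cast (by omega) p))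
            ((Fin.snoc jv (iv k) : Fin (2*t+1+1) → I) (Fin.cast (by omega) q))) = 0 := by
  simp only [Fin.cast_eq_self, Pf_snoc, mul_sum, sum_mul]
  rw [sum_comm, ← sum_add_distrib]
  refine sum_eq_zero fun k _ => ?_
  rw [← sum_add_distrib]
  refine sum_eq_zero fun l _ => ?_
  rw [hskew (iv k) (jv l)]
  ring

end
end
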